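/- Let u : ℝ³ → ℝ be a harmonic function (locally integrable, Δu = 0 in the distributional sense, hence smooth) whose gradient ∇u is square integrable on ℝ³. Then u is constant. -/

import Mathlib

open MeasureTheory

section HarmonicAux

open ContDiff Metric Set Filter

local notation "E3" => EuclideanSpace ℝ (Fin 3)

private noncomputable abbrev ee (i : Fin 3) : EuclideanSpace ℝ (Fin 3) :=
  EuclideanSpace.single i (1 : ℝ)

private lemma hone : (1 : WithTop ℕ∞) ≤ ∞ := by exact_mod_cast le_top
private lemma hne : (∞ : WithTop ℕ∞) ≠ 0 := by simp
private lemma hSI : ∞ + 1 ≤ (∞ : WithTop ℕ∞) := by exact_mod_cast le_top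

/-- Integral of a partial derivative of a compactly supported smooth function vanishes. -/
private lemma integral_fderiv_eq_zero (g : E3 → ℝ) (hg : ContDiff ℝ ∞ g)
    (hsupp : HasCompactSupport g) (v : E3) :
    ∫ x, fderiv ℝ g x v = 0 := by
  obtain ⟨C, hC⟩ := hg.lipschitzWith_of_hasCompactSupport hsupp hne
  have h := LipschitzWith.integral_lineDeriv_mul_eq (μ := (volume : Measure E3))
    (LipschitzWith.const (1 : ℝ)) hC hsupp (-v)
  simp only [neg_neg] at h
  have h1 : ∀ x : E3, lineDeriv ℝ (fun _ : E3 => (1:ℝ)) x (-v) = 0 := by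
    intro x
    rw [(differentiableAt_const (1:ℝ)).lineDeriv_eq_fderiv]
    simp
  have h2 : ∀ x : E3, lineDeriv ℝ g x v = fderiv ℝ g x v := fun x =>
    ((hg.differentiable hne) x).lineDeriv_eq_fderiv
  simp only [h1, h2, zero_mul, mul_one, integral_zero] at h
  exact h.symm

/-- fderiv of a CLM-valued function applied to a constant. -/
private lemma fderiv_apply_const {f : E3 → E3 →L[ℝ] ℝ} {x : E3}
    (hf : DifferentiableAt ℝ f x) (c a : E3) :
    fderiv ℝ (fun z => f z c) x a = fderiv ℝ f x a c := by
  rw [fderiv_clm_apply hf (differentiableAt_const c)]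
  simp

private lemma sym2 {h : E3 → ℝ} (hh : ContDiff ℝ ∞ h) (x a b : E3) :
    fderiv ℝ (fderiv ℝ h) x a b = fderiv ℝ (fderiv ℝ h) x b a :=
  second_derivative_symmetric
    (f := h) (f' := fderiv ℝ h)
    (fun y => ((hh.differentiable hne) y).hasFDerivAt)
    (((hh.fderiv_right hSI).differentiable hne x).hasFDerivAt) a b

private lemma outer_swap {h : E3 → ℝ} (hh : ContDiff ℝ ∞ h) (x a b : E3) :
    fderiv ℝ (fun z => fderiv ℝ h z b) x a = fderiv ℝ (fun z => fderiv ℝ h z a) x b := by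
  have hdiff : DifferentiableAt ℝ (fderiv ℝ h) x :=
    (hh.fderiv_right hSI).differentiable hne x
  rw [fderiv_apply_const hdiff, fderiv_apply_const hdiff, sym2 hh]

set_option maxHeartbeats 1000000 in
set_option synthInstance.maxHeartbeats 1000000 in
/-- Existence of nice cutoff functions with uniformly bounded gradients. -/
private lemma exists_cutoff : ∃ K : ℝ, 0 ≤ K ∧ ∀ R : ℝ, 1 ≤ R → ∃ χ : E3 → ℝ,
    ContDiff ℝ ∞ χ ∧ HasCompactSupport χ ∧ (∀ x : E3, ‖x‖ ≤ R → χ x = 1) ∧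
    (∀ x : E3, ‖fderiv ℝ χ x‖ ≤ K) ∧ (∀ x : E3, ‖x‖ < R → fderiv ℝ χ x = 0) := by
  classical
  have hstd : Differentiable ℝ Real.smoothTransition :=
    (Real.smoothTransition.contDiff (n := 1)).differentiable (by simp)
  have hd0 : ∀ t : ℝ, t < 0 ∨ 1 < t → deriv Real.smoothTransition t = 0 := by
    intro t ht
    rcases ht with ht | ht
    · have he : Real.smoothTransition =ᶠ[nhds t] fun _ => (0 : ℝ) := by
        filter_upwards [Iio_mem_nhds ht] with s hs
        exact Real.smoothTransition.zero_of_nonpos (le_of_lt hs)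
      rw [he.deriv_eq]; exact deriv_const _ _
    · have he : Real.smoothTransition =ᶠ[nhds t] fun _ => (1 : ℝ) := by
        filter_upwards [Ioi_mem_nhds ht] with s hs
        exact Real.smoothTransition.one_of_one_le (le_of_lt hs)
      rw [he.deriv_eq]; exact deriv_const _ _
  have hcont : Continuous (deriv Real.smoothTransition) :=
    (Real.smoothTransition.contDiff (n := (⊤ : ℕ∞))).continuous_deriv hone
  have hsupp : HasCompactSupport (deriv Real.smoothTransition) := by
    apply HasCompactSupport.intro (isCompact_Icc (a := (0:ℝ)) (b := 1))
    intro t ht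
    simp only [Set.mem_Icc, not_and_or, not_le] at ht
    exact hd0 t (by tauto)
  obtain ⟨C, hC⟩ := hsupp.exists_bound_of_continuous hcont
  have hC' : ∀ t : ℝ, |deriv Real.smoothTransition t| ≤ C := by
    intro t; simpa [Real.norm_eq_abs] using hC t
  have hC0 : 0 ≤ C := le_trans (norm_nonneg _) (hC 0)
  refine ⟨2 * C, by positivity, ?_⟩
  intro R hR
  have hR0 : 0 < R := lt_of_lt_of_le one_pos hR
  have hR2 : (0:ℝ) < R ^ 2 := by positivity
  set g : ℝ → ℝ := fun t => (4 - t / R ^ 2) / 3 with hgdef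
  set χ : E3 → ℝ := fun x => Real.smoothTransition (g (‖x‖ ^ 2)) with hχdef
  have hgd : ∀ t : ℝ, HasDerivAt g (-(1 / R ^ 2) / 3) t := by
    intro t
    have h1 : HasDerivAt (fun t : ℝ => t / R ^ 2) (1 / R ^ 2) t := by
      simpa using (hasDerivAt_id t).div_const (R ^ 2)
    exact (h1.const_sub 4).div_const 3
  have hchain : ∀ x : E3, HasFDerivAt χ
      (((deriv Real.smoothTransition (g (‖x‖ ^ 2))) * (-(1 / R ^ 2) / 3)) •
        ((2 : ℝ) • innerSL ℝ x)) x := by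
    intro x
    have h1 : HasDerivAt (Real.smoothTransition ∘ g)
        ((deriv Real.smoothTransition (g (‖x‖ ^ 2))) * (-(1 / R ^ 2) / 3)) (‖x‖ ^ 2) :=
      HasDerivAt.comp _ ((hstd _).hasDerivAt) (hgd _)
    have h2 : HasFDerivAt (fun y : E3 => ‖y‖ ^ 2) ((2 : ℝ) • innerSL ℝ x) x := by
      have := (hasStrictFDerivAt_norm_sq x).hasFDerivAt
      have hsm : ((2 : ℕ) • innerSL ℝ x) = ((2 : ℝ) • innerSL ℝ x) := by
        ext y; simp
      rwa [hsm] at this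
    have := h1.comp_hasFDerivAt x h2
    simpa [Function.comp_def, hχdef] using this
  have habs : |(-(1 / R ^ 2) / 3)| = 1 / R ^ 2 / 3 := by
    rw [abs_of_nonpos (by nlinarith [one_div_pos.mpr hR2] : -(1 / R ^ 2) / 3 ≤ 0)]
    ring
  have hnorm : ∀ x : E3, ‖fderiv ℝ χ x‖ =
      |deriv Real.smoothTransition (g (‖x‖ ^ 2))| * (1 / R ^ 2 / 3) * (2 * ‖x‖) := by
    intro x
    rw [(hchain x).fderiv, norm_smul, norm_smul, innerSL_apply_norm, Real.norm_eq_abs,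
      Real.norm_eq_abs, abs_mul, habs, abs_two]
  have hzero : ∀ x : E3, ‖x‖ < R → fderiv ℝ χ x = 0 := by
    intro x hx
    have hx0 : (0:ℝ) ≤ ‖x‖ := norm_nonneg _
    have h1 : ‖x‖ ^ 2 / R ^ 2 < 1 := by
      rw [div_lt_one hR2]; nlinarith
    have h2 : 1 < g (‖x‖ ^ 2) := by
      simp only [hgdef]; nlinarith
    rw [(hchain x).fderiv, hd0 _ (Or.inr h2)]
    simp
  refine ⟨χ, ?_, ?_, ?_, ?_, hzero⟩
  · exact Real.smoothTransition.contDiff.comp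
      ((contDiff_const.sub ((contDiff_norm_sq ℝ).div_const (R ^ 2))).div_const 3)
  · apply HasCompactSupport.intro (isCompact_closedBall (0 : E3) (2 * R))
    intro x hx
    have hx' : 2 * R < ‖x‖ := by
      simpa [mem_closedBall, dist_zero_right, not_le] using hx
    have h4 : (4:ℝ) < ‖x‖ ^ 2 / R ^ 2 := by
      rw [lt_div_iff₀ hR2]; nlinarith
    have h2 : g (‖x‖ ^ 2) ≤ 0 := by
      simp only [hgdef]; nlinarith
    exact Real.smoothTransition.zero_of_nonpos h2
  · intro x hx
    have hx0 : (0:ℝ) ≤ ‖x‖ := norm_nonneg _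
    have h1 : ‖x‖ ^ 2 / R ^ 2 ≤ 1 := by
      rw [div_le_one hR2]; nlinarith
    have h2 : 1 ≤ g (‖x‖ ^ 2) := by
      simp only [hgdef]; nlinarith
    exact Real.smoothTransition.one_of_one_le h2
  · intro x
    rcases le_or_gt ‖x‖ (2 * R) with hx | hx
    · rw [hnorm x]
      have h1 : |deriv Real.smoothTransition (g (‖x‖ ^ 2))| ≤ C := hC' _
      have h2 : (1 / R ^ 2 / 3) * (2 * ‖x‖) ≤ 2 := by
        have hx0 : (0:ℝ) ≤ ‖x‖ := norm_nonneg _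
        rw [div_div, div_mul_eq_mul_div, div_le_iff₀ (by positivity)]
        nlinarith
      calc |deriv Real.smoothTransition (g (‖x‖ ^ 2))| * (1 / R ^ 2 / 3) * (2 * ‖x‖)
          = |deriv Real.smoothTransition (g (‖x‖ ^ 2))| * ((1 / R ^ 2 / 3) * (2 * ‖x‖)) := by
            ring
        _ ≤ C * 2 := mul_le_mul h1 h2 (by positivity) hC0
        _ = 2 * C := by ring
    · have h4 : (4:ℝ) < ‖x‖ ^ 2 / R ^ 2 := by
        rw [lt_div_iff₀ hR2]; nlinarith
      have h2 : g (‖x‖ ^ 2) < 0 := by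
        simp only [hgdef]; nlinarith
      rw [(hchain x).fderiv, hd0 _ (Or.inl h2)]
      simp [hC0]

set_option maxHeartbeats 4000000 in
set_option synthInstance.maxHeartbeats 1000000 in
/-- Liouville-type theorem: a smooth harmonic function in `L²(ℝ³)` vanishes. -/
private lemma key (w : E3 → ℝ) (hw : ContDiff ℝ ∞ w)
    (hΔ : ∀ x : E3, ∑ j : Fin 3, fderiv ℝ (fun z => fderiv ℝ w z (ee j)) x (ee j) = 0)
    (hL2 : MemLp w 2 (volume : Measure E3)) :
    ∀ x : E3, w x = 0 := by
  classical
  have hwd : Differentiable ℝ w := hw.differentiable hne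
  have hfc : ContDiff ℝ ∞ (fderiv ℝ w) := hw.fderiv_right hSI
  have hDwc : ∀ j : Fin 3, ContDiff ℝ ∞ (fun x : E3 => fderiv ℝ w x (ee j)) :=
    fun j => hfc.clm_apply contDiff_const
  have hw2 : Integrable (fun x : E3 => w x ^ 2) volume := hL2.integrable_sq
  set Q : E3 → ℝ := fun x => ∑ j : Fin 3, (fderiv ℝ w x (ee j)) ^ 2 with hQdef
  have hQc : Continuous Q := by
    apply continuous_finset_sum
    intro j _
    exact ((hDwc j).continuous).pow 2
  have hQ0 : ∀ x, 0 ≤ Q x := fun x => Finset.sum_nonneg fun j _ => sq_nonneg _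
  obtain ⟨K, hK0, hcut⟩ := exists_cutoff
  -- tails of the integral of w² are small
  have htail : ∀ ε > (0:ℝ), ∀ R₀ : ℝ, ∃ R : ℝ, 1 ≤ R ∧ R₀ ≤ R ∧
      ∫ x in (Metric.ball (0:E3) R)ᶜ, w x ^ 2 ≤ ε := by
    intro ε hε R₀
    have hs : ∀ n : ℕ, MeasurableSet (Metric.ball (0:E3) (n:ℝ)) := fun n => measurableSet_ball
    have hmono : Monotone (fun n : ℕ => Metric.ball (0:E3) (n:ℝ)) := fun m n hmn =>
      Metric.ball_subset_ball (by exact_mod_cast hmn)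
    have hun : (⋃ n : ℕ, Metric.ball (0:E3) (n:ℝ)) = Set.univ := Metric.iUnion_ball_nat 0
    have h1 : Filter.Tendsto (fun n : ℕ => ∫ x in Metric.ball (0:E3) (n:ℝ), w x ^ 2)
        Filter.atTop (nhds (∫ x, w x ^ 2)) := by
      have := MeasureTheory.tendsto_setIntegral_of_monotone hs hmono
        (by rw [hun]; exact hw2.integrableOn)
      rwa [hun, MeasureTheory.setIntegral_univ] at this
    have h2 : Filter.Tendsto (fun n : ℕ => ∫ x in (Metric.ball (0:E3) (n:ℝ))ᶜ, w x ^ 2)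
        Filter.atTop (nhds 0) := by
      have heq : ∀ n : ℕ, ∫ x in (Metric.ball (0:E3) (n:ℝ))ᶜ, w x ^ 2
          = (∫ x, w x ^ 2) - ∫ x in Metric.ball (0:E3) (n:ℝ), w x ^ 2 := by
        intro n
        have := MeasureTheory.integral_add_compl (hs n) hw2
        linarith
      simp only [heq]
      have h5 : Filter.Tendsto
          (fun n : ℕ => (∫ x, w x ^ 2) - ∫ x in Metric.ball (0:E3) (n:ℝ), w x ^ 2)
          Filter.atTop (nhds ((∫ x, w x ^ 2) - ∫ x, w x ^ 2)) :=
        tendsto_const_nhds.sub h1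
      simpa using h5
    have h3 : ∀ᶠ n : ℕ in Filter.atTop,
        ∫ x in (Metric.ball (0:E3) (n:ℝ))ᶜ, w x ^ 2 < ε :=
      h2.eventually (gt_mem_nhds hε)
    have h4 : ∀ᶠ n : ℕ in Filter.atTop, max 1 R₀ ≤ (n:ℝ) :=
      tendsto_natCast_atTop_atTop.eventually_ge_atTop (max 1 R₀)
    obtain ⟨n, hn1, hn2⟩ := (h3.and h4).exists
    exact ⟨(n:ℝ), le_trans (le_max_left _ _) hn2, le_trans (le_max_right _ _) hn2,
      le_of_lt hn1⟩
  -- Caccioppoli estimate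
  have hmain : ∀ R : ℝ, 1 ≤ R → ∀ R₀ : ℝ, 0 < R₀ → R₀ ≤ R →
      ∫ x in Metric.closedBall (0:E3) R₀, Q x
        ≤ 12 * K ^ 2 * ∫ x in (Metric.ball (0:E3) R)ᶜ, w x ^ 2 := by
    intro R hR R₀ hR₀ hRR
    obtain ⟨χ, hχc, hχs, hχ1, hχK, hχ0⟩ := hcut R hR
    have hχd : Differentiable ℝ χ := hχc.differentiable hne
    have hχfc : ContDiff ℝ ∞ (fderiv ℝ χ) := hχc.fderiv_right hSI
    have hDχc : ∀ j : Fin 3, ContDiff ℝ ∞ (fun x : E3 => fderiv ℝ χ x (ee j)) :=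
      fun j => hχfc.clm_apply contDiff_const
    set F : Fin 3 → E3 → ℝ :=
      fun j x => (χ x * χ x) * (w x * fderiv ℝ w x (ee j)) with hFdef
    have hFc : ∀ j, ContDiff ℝ ∞ (F j) := fun j =>
      (hχc.mul hχc).mul (hw.mul (hDwc j))
    have hFs : ∀ j, HasCompactSupport (F j) := by
      intro j
      apply HasCompactSupport.intro hχs
      intro x hx
      simp [hFdef, image_eq_zero_of_notMem_tsupport hx]
    have hdiv : ∀ j, ∫ x, fderiv ℝ (F j) x (ee j) = 0 := fun j =>
      integral_fderiv_eq_zero _ (hFc j) (hFs j) _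
    -- pointwise expansion of the divergence
    have hexp : ∀ (j : Fin 3) (x : E3), fderiv ℝ (F j) x (ee j) =
        χ x ^ 2 * (fderiv ℝ w x (ee j)) ^ 2
          + 2 * χ x * (fderiv ℝ χ x (ee j)) * (w x * fderiv ℝ w x (ee j))
          + χ x ^ 2 * (w x * fderiv ℝ (fun z => fderiv ℝ w z (ee j)) x (ee j)) := by
      intro j x
      have d2 : DifferentiableAt ℝ (fun y : E3 => fderiv ℝ w y (ee j)) x :=
        (hDwc j).differentiable hne x
      have d1 : DifferentiableAt ℝ (fun y : E3 => χ y * χ y) x := (hχd x).mul (hχd x)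
      have d3 : DifferentiableAt ℝ (fun y : E3 => w y * fderiv ℝ w y (ee j)) x :=
        (hwd x).mul d2
      have e1 : fderiv ℝ (F j) x
          = (χ x * χ x) • fderiv ℝ (fun y : E3 => w y * fderiv ℝ w y (ee j)) x
            + (w x * fderiv ℝ w x (ee j)) • fderiv ℝ (fun y : E3 => χ y * χ y) x :=
        fderiv_mul d1 d3
      have e2 : fderiv ℝ (fun y : E3 => w y * fderiv ℝ w y (ee j)) x
          = w x • fderiv ℝ (fun y : E3 => fderiv ℝ w y (ee j)) x
            + (fderiv ℝ w x (ee j)) • fderiv ℝ w x := fderiv_mul (hwd x) d2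
      have e3 : fderiv ℝ (fun y : E3 => χ y * χ y) x
          = χ x • fderiv ℝ χ x + χ x • fderiv ℝ χ x := fderiv_mul (hχd x) (hχd x)
      have := congrArg (fun L : E3 →L[ℝ] ℝ => L (ee j)) e1
      simp only [ContinuousLinearMap.add_apply, ContinuousLinearMap.coe_smul',
        Pi.smul_apply, smul_eq_mul, e2, e3] at this
      rw [this]
      ring
    -- the two relevant quantities
    set a : E3 → ℝ := fun x => χ x ^ 2 * Q x with hadef
    set p : E3 → ℝ := fun x =>
      ∑ j : Fin 3, 2 * χ x * (fderiv ℝ χ x (ee j)) * (w x * fderiv ℝ w x (ee j)) with hpdef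
    set G : E3 → ℝ := fun x => ∑ j : Fin 3, (fderiv ℝ χ x (ee j)) ^ 2 with hGdef
    have hsum : ∀ x : E3, ∑ j : Fin 3, fderiv ℝ (F j) x (ee j) = a x + p x := by
      intro x
      rw [Finset.sum_congr rfl (fun j _ => hexp j x)]
      rw [Finset.sum_add_distrib, Finset.sum_add_distrib]
      have h1 : ∑ j : Fin 3, χ x ^ 2 * (fderiv ℝ w x (ee j)) ^ 2 = a x := by
        simp only [hadef, hQdef, Fin.sum_univ_three]
        ring
      have h3 : ∑ j : Fin 3,
          χ x ^ 2 * (w x * fderiv ℝ (fun z => fderiv ℝ w z (ee j)) x (ee j)) = 0 := by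
        have : ∀ j : Fin 3,
            χ x ^ 2 * (w x * fderiv ℝ (fun z => fderiv ℝ w z (ee j)) x (ee j))
            = (χ x ^ 2 * w x) * fderiv ℝ (fun z => fderiv ℝ w z (ee j)) x (ee j) := by
          intro j; ring
        rw [Finset.sum_congr rfl (fun j _ => this j), ← Finset.mul_sum, hΔ x, mul_zero]
      rw [h1, h3, hpdef, add_zero]
    -- integrability
    have hint_j : ∀ j : Fin 3, Integrable (fun x => fderiv ℝ (F j) x (ee j)) volume := by
      intro j
      apply Continuous.integrable_of_hasCompactSupport
      · exact ((((hFc j).fderiv_right hSI).clm_apply contDiff_const)).continuous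
      · exact ((hFs j).fderiv ℝ).comp_left (g := fun L : E3 →L[ℝ] ℝ => L (ee j)) rfl
    have hIa : Integrable a volume := by
      apply Continuous.integrable_of_hasCompactSupport
      · exact (hχc.continuous.pow 2).mul hQc
      · apply HasCompactSupport.intro hχs
        intro x hx
        simp [hadef, image_eq_zero_of_notMem_tsupport hx]
    have hIp : Integrable p volume := by
      apply Continuous.integrable_of_hasCompactSupport
      · apply continuous_finset_sum
        intro j _
        exact ((continuous_const.mul hχc.continuous).mul (hDχc j).continuous).mul
          (hw.continuous.mul (hDwc j).continuous)
      · apply HasCompactSupport.intro hχs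
        intro x hx
        simp [hpdef, image_eq_zero_of_notMem_tsupport hx]
    have hIG : Integrable (fun x => G x * w x ^ 2) volume := by
      apply Continuous.integrable_of_hasCompactSupport
      · exact (continuous_finset_sum _ fun j _ => ((hDχc j).continuous).pow 2).mul
          (hw.continuous.pow 2)
      · apply HasCompactSupport.intro (hχs.fderiv ℝ)
        intro x hx
        have h0 : fderiv ℝ χ x = 0 := image_eq_zero_of_notMem_tsupport hx
        simp [hGdef, h0]
    -- ∫ a = - ∫ p
    have hzero_int : ∫ x, (a x + p x) = 0 := by
      have h0 : ∫ x, ∑ j : Fin 3, fderiv ℝ (F j) x (ee j) = 0 := by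
        rw [integral_finset_sum _ (fun j _ => hint_j j)]
        simp [hdiv]
      rw [← h0]
      exact integral_congr_ae (Filter.Eventually.of_forall fun x => (hsum x).symm)
    have hA : ∫ x, a x = - ∫ x, p x := by
      have := integral_add hIa hIp
      rw [hzero_int] at this
      linarith
    -- pointwise bound for -p
    have hpb : ∀ x : E3, -p x ≤ 2⁻¹ * a x + 2 * (G x * w x ^ 2) := by
      intro x
      have h1 : -p x ≤ ∑ j : Fin 3,
          (2⁻¹ * (χ x ^ 2 * (fderiv ℝ w x (ee j)) ^ 2)
            + 2 * ((fderiv ℝ χ x (ee j)) ^ 2 * w x ^ 2)) := by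
        rw [hpdef, ← Finset.sum_neg_distrib]
        apply Finset.sum_le_sum
        intro j _
        nlinarith [sq_nonneg (χ x * fderiv ℝ w x (ee j) + 2 * fderiv ℝ χ x (ee j) * w x)]
      have h2 : ∑ j : Fin 3,
          (2⁻¹ * (χ x ^ 2 * (fderiv ℝ w x (ee j)) ^ 2)
            + 2 * ((fderiv ℝ χ x (ee j)) ^ 2 * w x ^ 2))
          = 2⁻¹ * a x + 2 * (G x * w x ^ 2) := by
        simp only [hadef, hGdef, hQdef, Fin.sum_univ_three]
        ring
      linarith [h1, h2.le, h2.ge]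
    -- ∫ a ≤ 4 ∫ G w²
    have hab : ∫ x, a x ≤ 2⁻¹ * (∫ x, a x) + 2 * ∫ x, G x * w x ^ 2 := by
      have h1 : ∫ x, -p x ≤ ∫ x, (2⁻¹ * a x + 2 * (G x * w x ^ 2)) :=
        integral_mono hIp.neg ((hIa.const_mul 2⁻¹).add (hIG.const_mul 2))
          (fun x => hpb x)
      rw [integral_neg] at h1
      rw [integral_add (hIa.const_mul 2⁻¹) (hIG.const_mul 2),
        MeasureTheory.integral_const_mul, MeasureTheory.integral_const_mul] at h1
      linarith [hA]
    have hGw : ∫ x, G x * w x ^ 2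
        ≤ 3 * K ^ 2 * ∫ x in (Metric.ball (0:E3) R)ᶜ, w x ^ 2 := by
      have hGpt : ∀ x : E3, G x * w x ^ 2
          ≤ Set.indicator ((Metric.ball (0:E3) R)ᶜ)
            (fun x => 3 * K ^ 2 * w x ^ 2) x := by
        intro x
        by_cases hx : ‖x‖ < R
        · have h0 : fderiv ℝ χ x = 0 := hχ0 x hx
          have hG0 : G x = 0 := by simp [hGdef, h0]
          rw [hG0, zero_mul]
          exact Set.indicator_nonneg (fun y _ => by positivity) x
        · have hmem : x ∈ (Metric.ball (0:E3) R)ᶜ := by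
            simp only [Set.mem_compl_iff, Metric.mem_ball, dist_zero_right]
            exact hx
          rw [Set.indicator_of_mem hmem]
          have hGb : G x ≤ 3 * K ^ 2 := by
            have hterm : ∀ j : Fin 3, (fderiv ℝ χ x (ee j)) ^ 2 ≤ K ^ 2 := by
              intro j
              have h1 : |fderiv ℝ χ x (ee j)| ≤ ‖fderiv ℝ χ x‖ := by
                have h2 := (fderiv ℝ χ x).le_opNorm (ee j)
                simpa [EuclideanSpace.norm_single] using h2
              have h2 : |fderiv ℝ χ x (ee j)| ≤ K := le_trans h1 (hχK x)
              nlinarith [abs_nonneg (fderiv ℝ χ x (ee j)), sq_abs (fderiv ℝ χ x (ee j))]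
            calc G x ≤ ∑ _j : Fin 3, K ^ 2 :=
                  Finset.sum_le_sum (fun j _ => hterm j)
              _ = 3 * K ^ 2 := by
                  norm_num [Finset.sum_const]
          nlinarith [sq_nonneg (w x)]
      calc ∫ x, G x * w x ^ 2
          ≤ ∫ x, Set.indicator ((Metric.ball (0:E3) R)ᶜ)
              (fun x => 3 * K ^ 2 * w x ^ 2) x :=
            integral_mono hIG
              (((hw2.const_mul (3 * K ^ 2))).indicator measurableSet_ball.compl)
              hGpt
        _ = ∫ x in (Metric.ball (0:E3) R)ᶜ, 3 * K ^ 2 * w x ^ 2 :=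
            integral_indicator measurableSet_ball.compl
        _ = 3 * K ^ 2 * ∫ x in (Metric.ball (0:E3) R)ᶜ, w x ^ 2 :=
            MeasureTheory.integral_const_mul _ _
    -- the ball integral is controlled
    have hballQ : ∫ x in Metric.closedBall (0:E3) R₀, Q x ≤ ∫ x, a x := by
      have h1 : ∫ x in Metric.closedBall (0:E3) R₀, Q x
          = ∫ x in Metric.closedBall (0:E3) R₀, a x := by
        apply MeasureTheory.setIntegral_congr_fun measurableSet_closedBall
        intro x hx
        have hxn : ‖x‖ ≤ R := by
          have := Metric.mem_closedBall.mp hx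
          rw [dist_zero_right] at this
          linarith
        have := hχ1 x hxn
        simp [hadef, this]
      rw [h1]
      apply MeasureTheory.setIntegral_le_integral hIa
      filter_upwards with x
      have : 0 ≤ χ x ^ 2 * Q x := mul_nonneg (sq_nonneg _) (hQ0 x)
      simpa [hadef] using this
    calc ∫ x in Metric.closedBall (0:E3) R₀, Q x ≤ ∫ x, a x := hballQ
      _ ≤ 2⁻¹ * (∫ x, a x) + 2 * ∫ x, G x * w x ^ 2 := hab
      _ ≤ 2⁻¹ * (∫ x, a x) + 2 * (3 * K ^ 2 * ∫ x in (Metric.ball (0:E3) R)ᶜ, w x ^ 2) := by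
          linarith [hGw]
      _ ≤ 12 * K ^ 2 * ∫ x in (Metric.ball (0:E3) R)ᶜ, w x ^ 2 := by
          have h4 : ∫ x in Metric.closedBall (0:E3) R₀, Q x ≤ ∫ x, a x := hballQ
          -- from ∫ a ≤ 2⁻¹ ∫ a + 2 ∫ Gw² we get ∫ a ≤ 4 ∫ Gw²
          have h5 : ∫ x, a x ≤ 4 * ∫ x, G x * w x ^ 2 := by linarith [hab]
          have h6 : (0:ℝ) ≤ ∫ x in (Metric.ball (0:E3) R)ᶜ, w x ^ 2 :=
            MeasureTheory.setIntegral_nonneg measurableSet_ball.compl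
              (fun x _ => sq_nonneg _)
          nlinarith [hGw, h5]
  -- every ball integral of Q vanishes, hence Q = 0
  have hQzero : ∀ y : E3, Q y = 0 := by
    intro y
    set R₀ : ℝ := ‖y‖ + 1 with hR₀def
    have hR₀ : 0 < R₀ := by positivity
    have hI0 : ∫ x in Metric.closedBall (0:E3) R₀, Q x = 0 := by
      have hnonneg : 0 ≤ ∫ x in Metric.closedBall (0:E3) R₀, Q x :=
        MeasureTheory.setIntegral_nonneg measurableSet_closedBall (fun x _ => hQ0 x)
      have hle : ∀ ε > (0:ℝ), ∫ x in Metric.closedBall (0:E3) R₀, Q x ≤ ε := by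
        intro ε hε
        have hd : (0:ℝ) < 12 * K ^ 2 + 1 := by positivity
        obtain ⟨R, hR1, hRR₀, htail'⟩ := htail (ε / (12 * K ^ 2 + 1)) (by positivity) R₀
        have h1 := hmain R hR1 R₀ hR₀ hRR₀
        have h2 : 12 * K ^ 2 * ∫ x in (Metric.ball (0:E3) R)ᶜ, w x ^ 2
            ≤ 12 * K ^ 2 * (ε / (12 * K ^ 2 + 1)) := by
          apply mul_le_mul_of_nonneg_left htail' (by positivity)
        have h3 : 12 * K ^ 2 * (ε / (12 * K ^ 2 + 1)) ≤ ε := by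
          rw [mul_div_assoc']
          rw [div_le_iff₀ hd]
          nlinarith [sq_nonneg K, hε.le]
        linarith
      by_contra hne
      have hpos : 0 < ∫ x in Metric.closedBall (0:E3) R₀, Q x :=
        lt_of_le_of_ne hnonneg (Ne.symm hne)
      have := hle ((∫ x in Metric.closedBall (0:E3) R₀, Q x) / 2) (by linarith)
      linarith
    by_contra hQy
    have hQypos : 0 < Q y := lt_of_le_of_ne (hQ0 y) (Ne.symm hQy)
    have hev : ∀ᶠ z in nhds y, Q y / 2 < Q z :=
      (hQc.continuousAt).eventually (eventually_gt_nhds (by linarith))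
    obtain ⟨δ, hδ0, hδ⟩ := Metric.eventually_nhds_iff_ball.mp hev
    set δ' : ℝ := min δ 1 with hδ'def
    have hδ'0 : 0 < δ' := lt_min hδ0 one_pos
    have hδ'1 : δ' ≤ 1 := min_le_right _ _
    have hsub : Metric.ball y δ' ⊆ Metric.closedBall (0:E3) R₀ := by
      intro z hz
      have h1 : dist z y < δ' := Metric.mem_ball.mp hz
      have h2 : dist z 0 ≤ dist z y + dist y 0 := dist_triangle _ _ _
      rw [Metric.mem_closedBall, hR₀def]
      rw [dist_zero_right] at h2 ⊢
      have h3 : dist y (0:E3) = ‖y‖ := dist_zero_right y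
      linarith
    have hQint : IntegrableOn Q (Metric.closedBall (0:E3) R₀) volume :=
      hQc.continuousOn.integrableOn_compact (isCompact_closedBall _ _)
    have h1 : ∫ x in Metric.ball y δ', Q x ≤ ∫ x in Metric.closedBall (0:E3) R₀, Q x :=
      MeasureTheory.setIntegral_mono_set hQint
        (Filter.Eventually.of_forall fun x => hQ0 x)
        (HasSubset.Subset.eventuallyLE hsub)
    have h2 : Q y / 2 * (volume (Metric.ball y δ')).toReal
        ≤ ∫ x in Metric.ball y δ', Q x := by
      rw [mul_comm, ← smul_eq_mul, ← measureReal_def]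
      apply MeasureTheory.setIntegral_ge_of_const_le measurableSet_ball
        measure_ball_lt_top.ne
      · intro z hz
        exact le_of_lt (hδ z (Metric.ball_subset_ball (min_le_left _ _) hz))
      · exact hQint.mono_set hsub
    have h3 : 0 < (volume (Metric.ball y δ')).toReal :=
      ENNReal.toReal_pos (measure_ball_pos volume y hδ'0).ne' measure_ball_lt_top.ne
    nlinarith [mul_pos (half_pos hQypos) h3]
  -- hence all partial derivatives vanish and w is constant
  have hDw0 : ∀ (y : E3) (j : Fin 3), fderiv ℝ w y (ee j) = 0 := by
    intro y j
    have hle : (fderiv ℝ w y (ee j)) ^ 2 ≤ Q y :=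
      Finset.single_le_sum (f := fun j : Fin 3 => (fderiv ℝ w y (ee j)) ^ 2)
        (fun i _ => sq_nonneg _) (Finset.mem_univ j)
    have h0 : (fderiv ℝ w y (ee j)) ^ 2 = 0 := le_antisymm (hQzero y ▸ hle) (sq_nonneg _)
    exact (pow_eq_zero_iff two_ne_zero).mp h0
  have hfd0 : ∀ y : E3, fderiv ℝ w y = 0 := by
    intro y
    apply ContinuousLinearMap.ext
    intro v
    have hv := (EuclideanSpace.basisFun (Fin 3) ℝ).sum_repr v
    have h2 : ∀ i : Fin 3,
        fderiv ℝ w y ((EuclideanSpace.basisFun (Fin 3) ℝ) i) = 0 := by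
      intro i
      rw [EuclideanSpace.basisFun_apply]
      exact hDw0 y i
    have h1 : fderiv ℝ w y v = ∑ i : Fin 3,
        (EuclideanSpace.basisFun (Fin 3) ℝ).repr v i •
          fderiv ℝ w y ((EuclideanSpace.basisFun (Fin 3) ℝ) i) := by
      conv_lhs => rw [← hv]
      rw [map_sum]
      exact Finset.sum_congr rfl fun i _ => by rw [_root_.map_smul]
    rw [h1]
    have h3 : ∀ i : Fin 3, (EuclideanSpace.basisFun (Fin 3) ℝ).repr v i •
        fderiv ℝ w y ((EuclideanSpace.basisFun (Fin 3) ℝ) i) = 0 := fun i => by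
      rw [h2 i, smul_zero]
    rw [Finset.sum_congr rfl fun i _ => h3 i]
    simp
  have hconst : ∀ y : E3, w y = w 0 := fun y => is_const_of_fderiv_eq_zero hwd hfd0 y 0
  have hcw : Integrable (fun _ : E3 => w 0 ^ 2) volume := by
    have heq : (fun x : E3 => w x ^ 2) = fun _ : E3 => w 0 ^ 2 :=
      funext fun x => by rw [hconst x]
    rwa [heq] at hw2
  rcases integrable_const_iff.mp hcw with h | h
  · intro y
    rw [hconst y]
    exact (pow_eq_zero_iff two_ne_zero).mp h
  · exfalso
    have h' := h.measure_univ_lt_top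
    rw [MeasureTheory.measure_univ_of_isAddLeftInvariant] at h'
    exact (lt_irrefl _) h'

end HarmonicAux

open ContDiff in
/-- A smooth harmonic function on `ℝ³` whose gradient is square integrable is constant. -/
theorem harmonic_gradient_L2_const
    (u : EuclideanSpace ℝ (Fin 3) → ℝ)
    (hu : ContDiff ℝ (⊤ : ℕ∞) u)
    (hharm : ∀ x, ∑ i : Fin 3,
      fderiv ℝ (fun z => fderiv ℝ u z (EuclideanSpace.single i (1 : ℝ))) x
        (EuclideanSpace.single i (1 : ℝ)) = 0)
    (hgrad : MemLp (fun x => fderiv ℝ u x) 2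
      (volume : Measure (EuclideanSpace ℝ (Fin 3)))) :
    ∃ a : ℝ, ∀ x, u x = a := by
  have hu' : ContDiff ℝ ∞ u := hu.of_le (by simp)
  have hfc : ContDiff ℝ ∞ (fderiv ℝ u) := hu'.fderiv_right hSI
  have hfd : Differentiable ℝ (fderiv ℝ u) := hfc.differentiable hne
  have hWc : ∀ i : Fin 3,
      ContDiff ℝ ∞ (fun x => fderiv ℝ u x (EuclideanSpace.single i (1:ℝ))) :=
    fun i => hfc.clm_apply contDiff_const
  have hWL2 : ∀ i : Fin 3,
      MemLp (fun x => fderiv ℝ u x (EuclideanSpace.single i (1:ℝ))) 2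
        (volume : Measure (EuclideanSpace ℝ (Fin 3))) := by
    intro i
    apply MemLp.of_le hgrad ((hWc i).continuous.aestronglyMeasurable)
    filter_upwards with x
    calc ‖fderiv ℝ u x (EuclideanSpace.single i (1:ℝ))‖
        ≤ ‖fderiv ℝ u x‖ * ‖EuclideanSpace.single (𝕜 := ℝ) i (1:ℝ)‖ :=
          (fderiv ℝ u x).le_opNorm _
      _ = ‖fderiv ℝ u x‖ := by rw [EuclideanSpace.norm_single]; simp
  have hWharm : ∀ (i : Fin 3) (x : EuclideanSpace ℝ (Fin 3)),
      ∑ j : Fin 3, fderiv ℝ (fun z => fderiv ℝ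
          (fun y => fderiv ℝ u y (EuclideanSpace.single i (1:ℝ))) z
          (EuclideanSpace.single j (1:ℝ))) x (EuclideanSpace.single j (1:ℝ)) = 0 := by
    intro i x
    have hinner : ∀ (b c z : EuclideanSpace ℝ (Fin 3)),
        fderiv ℝ (fun y => fderiv ℝ u y c) z b = fderiv ℝ (fderiv ℝ u) z b c :=
      fun b c z => fderiv_apply_const (hfd z) c b
    have hswap : ∀ (j : Fin 3),
        fderiv ℝ (fun z => fderiv ℝ
            (fun y => fderiv ℝ u y (EuclideanSpace.single i (1:ℝ))) z
            (EuclideanSpace.single j (1:ℝ))) x (EuclideanSpace.single j (1:ℝ))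
        = fderiv ℝ (fun z => fderiv ℝ
            (fun y => fderiv ℝ u y (EuclideanSpace.single j (1:ℝ))) z
            (EuclideanSpace.single j (1:ℝ))) x (EuclideanSpace.single i (1:ℝ)) := by
      intro j
      have e1 : (fun z => fderiv ℝ
            (fun y => fderiv ℝ u y (EuclideanSpace.single i (1:ℝ))) z
            (EuclideanSpace.single j (1:ℝ)))
          = (fun z => fderiv ℝ
            (fun y => fderiv ℝ u y (EuclideanSpace.single j (1:ℝ))) z
            (EuclideanSpace.single i (1:ℝ))) := by
        funext z
        rw [hinner, hinner, sym2 hu']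
      rw [e1]
      exact outer_swap (hfc.clm_apply contDiff_const) x
        (EuclideanSpace.single j (1:ℝ)) (EuclideanSpace.single i (1:ℝ))
    rw [Finset.sum_congr rfl (fun j _ => hswap j)]
    have hdiffg : ∀ j : Fin 3, DifferentiableAt ℝ
        (fun z => fderiv ℝ (fun y => fderiv ℝ u y (EuclideanSpace.single j (1:ℝ))) z
          (EuclideanSpace.single j (1:ℝ))) x :=
      fun j => (((hfc.clm_apply contDiff_const).fderiv_right hSI).clm_apply
        contDiff_const).differentiable hne x
    have h1 : fderiv ℝ (fun z => ∑ j : Fin 3,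
          fderiv ℝ (fun y => fderiv ℝ u y (EuclideanSpace.single j (1:ℝ))) z
            (EuclideanSpace.single j (1:ℝ))) x (EuclideanSpace.single i (1:ℝ))
        = ∑ j : Fin 3, fderiv ℝ
            (fun z => fderiv ℝ (fun y => fderiv ℝ u y (EuclideanSpace.single j (1:ℝ))) z
              (EuclideanSpace.single j (1:ℝ))) x (EuclideanSpace.single i (1:ℝ)) := by
      rw [fderiv_fun_sum (fun j _ => hdiffg j)]
      simp
    rw [← h1]
    have h2 : (fun z => ∑ j : Fin 3,
          fderiv ℝ (fun y => fderiv ℝ u y (EuclideanSpace.single j (1:ℝ))) z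
            (EuclideanSpace.single j (1:ℝ))) = fun _ => (0:ℝ) :=
      funext fun z => hharm z
    rw [h2]
    simp
  have hW0 : ∀ (i : Fin 3) (x : EuclideanSpace ℝ (Fin 3)),
      fderiv ℝ u x (EuclideanSpace.single i (1:ℝ)) = 0 := fun i x =>
    key (fun x => fderiv ℝ u x (EuclideanSpace.single i (1:ℝ)))
      (hWc i) (hWharm i) (hWL2 i) x
  have hfd0 : ∀ x : EuclideanSpace ℝ (Fin 3), fderiv ℝ u x = 0 := by
    intro y
    apply ContinuousLinearMap.ext
    intro v
    have hv := (EuclideanSpace.basisFun (Fin 3) ℝ).sum_repr v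
    have h2 : ∀ i : Fin 3,
        fderiv ℝ u y ((EuclideanSpace.basisFun (Fin 3) ℝ) i) = 0 := by
      intro i
      rw [EuclideanSpace.basisFun_apply]
      exact hW0 i y
    have h1 : fderiv ℝ u y v = ∑ i : Fin 3,
        (EuclideanSpace.basisFun (Fin 3) ℝ).repr v i •
          fderiv ℝ u y ((EuclideanSpace.basisFun (Fin 3) ℝ) i) := by
      conv_lhs => rw [← hv]
      rw [map_sum]
      exact Finset.sum_congr rfl fun i _ => by rw [_root_.map_smul]
    rw [h1]
    have h3 : ∀ i : Fin 3, (EuclideanSpace.basisFun (Fin 3) ℝ).repr v i •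
        fderiv ℝ u y ((EuclideanSpace.basisFun (Fin 3) ℝ) i) = 0 := fun i => by
      rw [h2 i, smul_zero]
    rw [Finset.sum_congr rfl fun i _ => h3 i]
    simp
  exact ⟨u 0, fun x => is_const_of_fderiv_eq_zero (hu'.differentiable hne) hfd0 x 0⟩
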